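/- arXiv:2306.15818 — 5 statements merged into one kernel-verified Lean document; each statement's English description precedes it below -/
import Mathlib

section
/- For any finite connected simple graph G, 0 ≤ μt(G) ≤ n(G) − diam(G) + 1, where n(G) is the order of G and diam(G) is its diameter. -/
open SimpleGraph

/-- `X` is a total mutual-visibility set of `G`: every two vertices of `G` are `X`-visible,
i.e. joined by a shortest path whose internal vertices avoid `X`. -/
def IsTMVSet {V : Type*} (G : SimpleGraph V) (X : Set V) : Prop :=
  ∀ x y : V, ∃ p : G.Walk x y, p.length = G.dist x y ∧
    ∀ w ∈ p.support, w ≠ x → w ≠ y → w ∉ X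

/-- The total mutual-visibility number of `G`. -/
noncomputable def muT {V : Type*} (G : SimpleGraph V) : ℕ :=
  sSup {n : ℕ | ∃ X : Set V, IsTMVSet G X ∧ X.ncard = n}

/-- `D` is a dominating set of `G`. -/
def IsDomSet {V : Type*} (G : SimpleGraph V) (D : Set V) : Prop :=
  ∀ v : V, v ∉ D → ∃ u ∈ D, G.Adj u v

/-- The domination number of `G`. -/
noncomputable def gammaDom {V : Type*} (G : SimpleGraph V) : ℕ :=
  sInf {n : ℕ | ∃ D : Set V, IsDomSet G D ∧ D.ncard = n}

/-- `D` is a connected dominating set of `G`. -/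
def IsConnDomSet {V : Type*} (G : SimpleGraph V) (D : Set V) : Prop :=
  IsDomSet G D ∧ (G.induce D).Connected

/-- The connected domination number of `G`. -/
noncomputable def gammaConnDom {V : Type*} (G : SimpleGraph V) : ℕ :=
  sInf {n : ℕ | ∃ D : Set V, IsConnDomSet G D ∧ D.ncard = n}

/-- The closed neighborhood of a vertex. -/
def closedNbhd {V : Type*} (G : SimpleGraph V) (v : V) : Set V :=
  insert v (G.neighborSet v)

/-- The set of simplicial vertices of `G`. -/
def simpSet {V : Type*} (G : SimpleGraph V) : Set V :=
  {v | G.IsClique (G.neighborSet v)}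

/-- The set `P(G)` of vertices that appear as the unique common closed neighbor of
two vertices. -/
def pSet {V : Type*} (G : SimpleGraph V) : Set V :=
  {v | ∃ u w : V, closedNbhd G u ∩ closedNbhd G w = {v}}

/-- The set `C(G)` of vertices belonging to every maximum total mutual-visibility set. -/
def compulsorySet {V : Type*} (G : SimpleGraph V) : Set V :=
  {v | ∀ X : Set V, IsTMVSet G X → X.ncard = muT G → v ∈ X}

/-- The set `F(G)` of vertices belonging to no maximum total mutual-visibility set. -/
def forbiddenSet {V : Type*} (G : SimpleGraph V) : Set V :=
  {v | ∀ X : Set V, IsTMVSet G X → X.ncard = muT G → v ∉ X}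

/-- The independent total mutual-visibility number of `G`. -/
noncomputable def muIT {V : Type*} (G : SimpleGraph V) : ℕ :=
  sSup {n : ℕ | ∃ X : Set V, IsTMVSet G X ∧ (∀ u ∈ X, ∀ v ∈ X, ¬ G.Adj u v) ∧ X.ncard = n}

/-- The join `G + H` of two graphs. -/
def joinGraph {V W : Type*} (G : SimpleGraph V) (H : SimpleGraph W) :
    SimpleGraph (V ⊕ W) :=
  SimpleGraph.fromRel (fun x y =>
    (∃ a b, x = Sum.inl a ∧ y = Sum.inl b ∧ G.Adj a b) ∨
    (∃ a b, x = Sum.inr a ∧ y = Sum.inr b ∧ H.Adj a b) ∨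
    (∃ a b, x = Sum.inl a ∧ y = Sum.inr b))

/-- The corona product `G ⊙ H`: a copy of `G` together with a copy `Hᵢ` of `H` for each
vertex `uᵢ` of `G`, where `uᵢ` is joined to all vertices of `Hᵢ`. -/
def coronaProd {V W : Type*} (G : SimpleGraph V) (H : SimpleGraph W) :
    SimpleGraph (V ⊕ V × W) :=
  SimpleGraph.fromRel (fun x y =>
    (∃ a b, x = Sum.inl a ∧ y = Sum.inl b ∧ G.Adj a b) ∨
    (∃ i w w', x = Sum.inr (i, w) ∧ y = Sum.inr (i, w') ∧ H.Adj w w') ∨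
    (∃ i w, x = Sum.inl i ∧ y = Sum.inr (i, w)))

/-- The lexicographic product `G ∘ H`. -/
def lexProd {V W : Type*} (G : SimpleGraph V) (H : SimpleGraph W) :
    SimpleGraph (V × W) where
  Adj x y := G.Adj x.1 y.1 ∨ (x.1 = y.1 ∧ H.Adj x.2 y.2)
  symm := ⟨fun x y h => by
    rcases h with h | ⟨h1, h2⟩
    · exact Or.inl h.symm
    · exact Or.inr ⟨h1.symm, h2.symm⟩⟩
  loopless := ⟨fun x h => by
    rcases h with h | ⟨_, h⟩
    · exact G.loopless.irrefl _ h
    · exact H.loopless.irrefl _ h⟩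

/-- `B` induces a 2-connected subgraph of `G`. -/
def IsTwoConnSet {V : Type*} (G : SimpleGraph V) (B : Set V) : Prop :=
  3 ≤ B.ncard ∧ (G.induce B).Connected ∧ ∀ v ∈ B, (G.induce (B \ {v})).Connected

/-!
A shortest path between two vertices at distance `diam G` has `diam G - 1` internal vertices,
and for the two ends to be `X`-visible none of them may lie in `X`.
-/

open Finset

namespace SimpleGraph

variable {V : Type*} {G : SimpleGraph V}

lemma Walk.IsPath.length_sub_one_le_card_support_sdiff [DecidableEq V] {u v : V}
    {p : G.Walk u v} (hp : p.IsPath) : p.length - 1 ≤ #(p.support.toFinset \ {u, v}) := by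
  have hsupp : #p.support.toFinset = p.length + 1 := by
    rw [List.toFinset_card_of_nodup hp.support_nodup, Walk.length_support]
  have hends : #({u, v} : Finset V) ≤ 2 := card_le_two
  have := le_card_sdiff ({u, v} : Finset V) p.support.toFinset
  omega

lemma IsTMVSet.ncard_add_dist_sub_one_le [Fintype V] {X : Set V} (hX : IsTMVSet G X)
    (x y : V) : X.ncard + (G.dist x y - 1) ≤ Fintype.card V := by
  classical
  obtain ⟨p, hlen, havoid⟩ := hX x y
  set S := p.support.toFinset \ {x, y}
  have hS : G.dist x y - 1 ≤ #S :=
    hlen ▸ (p.isPath_of_length_eq_dist hlen).length_sub_one_le_card_support_sdiff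
  have hdisj : Disjoint X.toFinset S := by
    refine Finset.disjoint_left.mpr fun w hwX hwS => ?_
    simp only [S, mem_sdiff, List.mem_toFinset, mem_insert, mem_singleton, not_or] at hwS
    exact havoid w hwS.1 hwS.2.1 hwS.2.2 (Set.mem_toFinset.mp hwX)
  calc X.ncard + (G.dist x y - 1) ≤ #X.toFinset + #S := by
        rw [Set.ncard_eq_toFinset_card']; omega
    _ = #(X.toFinset ∪ S) := (card_union_of_disjoint hdisj).symm
    _ ≤ Fintype.card V := card_le_univ _

lemma IsTMVSet.ncard_le_card_sub_diam_add_one [Fintype V] {X : Set V} (hX : IsTMVSet G X) :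
    X.ncard ≤ Fintype.card V - G.diam + 1 := by
  cases isEmpty_or_nonempty V
  · simp [Set.eq_empty_of_isEmpty X]
  obtain ⟨x, y, hxy⟩ := G.exists_dist_eq_diam
  have := hX.ncard_add_dist_sub_one_le x y
  omega

end SimpleGraph

theorem muT_le_card_sub_diam_add_one_general {V : Type*} [Fintype V] (G : SimpleGraph V) :
    0 ≤ muT G ∧ muT G ≤ Fintype.card V - G.diam + 1 :=
  ⟨Nat.zero_le _, csSup_le' <| by
    rintro _ ⟨X, hX, rfl⟩
    exact hX.ncard_le_card_sub_diam_add_one⟩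

/-- For any finite connected graph `G`,
`0 ≤ μt(G) ≤ n(G) - diam(G) + 1`. -/
theorem muT_le_card_sub_diam_add_one {V : Type*} [Fintype V] (G : SimpleGraph V)
    (hG : G.Connected) :
    0 ≤ muT G ∧ muT G ≤ Fintype.card V - G.diam + 1 :=
  muT_le_card_sub_diam_add_one_general G
end

section
/- For a finite connected simple graph G: (i) μt(G) = n(G) if and only if G is a complete graph; (ii) μt(G) = n(G) − 1 if and only if G is a non-complete graph with domination number γ(G) = 1 (i.e., G has a universal vertex but is not complete). -/
open SimpleGraph

/-!
If `x, y` are distinct and non-adjacent, every shortest `x,y`-path has an internal vertex, which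
must lie outside any set making `x` and `y` visible. So `V(G)` is a total mutual-visibility set
only when `G` is complete, and `V(G) ∖ {v}` is one exactly when `v` is adjacent to every other
vertex (the paths of length at most two through `v` witness visibility). Since a total
mutual-visibility set of size `n(G)` or `n(G) - 1` must be of one of these two forms, both
equivalences follow.
-/

open Set

section Visibility

variable {V : Type*} {G : SimpleGraph V} {X : Set V} {x y v : V}

def MutuallyVisible (G : SimpleGraph V) (X : Set V) (x y : V) : Prop :=
  ∃ p : G.Walk x y, p.length = G.dist x y ∧ ∀ w ∈ p.support, w ≠ x → w ≠ y → w ∉ X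

theorem mutuallyVisible_self (x : V) : MutuallyVisible G X x x :=
  ⟨.nil, by simp, by simp⟩

theorem SimpleGraph.Adj.mutuallyVisible (h : G.Adj x y) : MutuallyVisible G X x y :=
  ⟨h.toWalk, by rw [h.length_toWalk, dist_eq_one_iff_adj.mpr h], by simp [h.support_toWalk]⟩

theorem mutuallyVisible_of_adj_of_adj (hxy : x ≠ y) (hn : ¬G.Adj x y) (hxv : G.Adj x v)
    (hvy : G.Adj v y) (hv : v ∉ X) : MutuallyVisible G X x y := by
  let p : G.Walk x y := .cons hxv hvy.toWalk
  have hdist : G.dist x y = 2 := by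
    have h0 := p.reachable.pos_dist_of_ne hxy
    have h1 : G.dist x y ≠ 1 := fun h => hn (dist_eq_one_iff_adj.mp h)
    have h2 : G.dist x y ≤ 2 := dist_le p
    omega
  refine ⟨p, by simp [p, hdist], fun w hw hwx hwy => ?_⟩
  simp only [p, Walk.support_cons, hvy.support_toWalk, List.mem_cons, List.not_mem_nil,
    or_false] at hw
  obtain rfl | rfl | rfl := hw <;> simp_all

theorem MutuallyVisible.exists_not_mem (h : MutuallyVisible G X x y) (hxy : x ≠ y)
    (hn : ¬G.Adj x y) : ∃ b, b ≠ x ∧ b ≠ y ∧ b ∉ X := by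
  obtain ⟨p, -, hint⟩ := h
  cases p with
  | nil => exact absurd rfl hxy
  | @cons _ b _ hb q =>
    have hby : b ≠ y := by rintro rfl; exact hn hb
    exact ⟨b, hb.ne', hby, hint b (by simp) hb.ne' hby⟩

theorem isTMVSet_univ_iff : IsTMVSet G univ ↔ G = ⊤ := by
  constructor
  · intro hX
    ext x y
    refine ⟨Adj.ne, fun hxy => by_contra fun hn => ?_⟩
    obtain ⟨b, -, -, hb⟩ := MutuallyVisible.exists_not_mem (hX x y) hxy hn
    exact hb (mem_univ b)
  · rintro rfl x y
    rcases eq_or_ne x y with rfl | hxy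
    · exact mutuallyVisible_self x
    · exact Adj.mutuallyVisible ((top_adj x y).mpr hxy)

theorem isTMVSet_compl_singleton_iff : IsTMVSet G {v}ᶜ ↔ ∀ u, u ≠ v → G.Adj v u := by
  constructor
  · intro hX u huv
    by_contra hn
    obtain ⟨b, hbv, -, hb⟩ := MutuallyVisible.exists_not_mem (hX v u) huv.symm hn
    exact hb hbv
  · intro hv x y
    rcases eq_or_ne x y with rfl | hxy
    · exact mutuallyVisible_self x
    by_cases hadj : G.Adj x y
    · exact hadj.mutuallyVisible
    have hxv : x ≠ v := by rintro rfl; exact hadj (hv y hxy.symm)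
    have hyv : y ≠ v := by rintro rfl; exact hadj (hv x hxy).symm
    exact mutuallyVisible_of_adj_of_adj hxy hadj (hv x hxv).symm (hv y hyv) (by simp)

end Visibility

section MuT

variable {V : Type*} {G : SimpleGraph V} {X : Set V}

theorem muT_le {n : ℕ} (h : ∀ X, IsTMVSet G X → X.ncard ≤ n) : muT G ≤ n :=
  csSup_le' <| by rintro _ ⟨X, hX, rfl⟩; exact h X hX

variable [Finite V]

theorem ncard_le_muT (hX : IsTMVSet G X) : X.ncard ≤ muT G :=
  le_csSup ⟨Nat.card V, by rintro _ ⟨Y, -, rfl⟩; exact ncard_le_card Y⟩ ⟨X, hX, rfl⟩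

theorem exists_isTMVSet_ncard_eq_muT (hG : G.Connected) :
    ∃ X, IsTMVSet G X ∧ X.ncard = muT G := by
  refine Nat.sSup_mem (s := {n | ∃ X, IsTMVSet G X ∧ X.ncard = n})
    ⟨0, ∅, fun x y => ?_, ncard_empty V⟩
    ⟨Nat.card V, by rintro _ ⟨Y, -, rfl⟩; exact ncard_le_card Y⟩
  obtain ⟨p, hp⟩ := hG.exists_walk_length_eq_dist x y
  exact ⟨p, hp, by simp⟩

theorem muT_eq_card_iff (hG : G.Connected) : muT G = Nat.card V ↔ IsTMVSet G univ := by
  refine ⟨fun h => ?_, fun h => le_antisymm (muT_le fun X _ => ncard_le_card X) ?_⟩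
  · obtain ⟨X, hX, hXc⟩ := exists_isTMVSet_ncard_eq_muT hG
    obtain rfl : X = univ := by_contra fun hne => (ncard_lt_card hne).ne (hXc.trans h)
    exact hX
  · simpa using ncard_le_muT h

theorem muT_le_card_sub_one (h : ¬IsTMVSet G univ) : muT G ≤ Nat.card V - 1 :=
  muT_le fun X hX => by
    have := ncard_lt_card fun hXu => h (hXu ▸ hX)
    omega

theorem muT_eq_card_sub_one_iff (hG : G.Connected) :
    muT G = Nat.card V - 1 ↔ ¬IsTMVSet G univ ∧ ∃ v, IsTMVSet G {v}ᶜ := by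
  have : Nonempty V := hG.nonempty
  have hcard := Nat.card_pos (α := V)
  have hcompl (v : V) : ({v}ᶜ : Set V).ncard = Nat.card V - 1 := by
    rw [ncard_compl, ncard_singleton]
  constructor
  · intro h
    have huniv : ¬IsTMVSet G univ := fun hu => by
      have := (muT_eq_card_iff hG).mpr hu
      omega
    obtain ⟨X, hX, hXc⟩ := exists_isTMVSet_ncard_eq_muT hG
    obtain ⟨v, hv⟩ : ∃ v, v ∉ X := by
      by_contra! hX'
      exact huniv (eq_univ_of_forall hX' ▸ hX)
    have hXv : X ⊆ {v}ᶜ := fun w hw hwv => hv (hwv ▸ hw)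
    obtain rfl : X = {v}ᶜ := eq_of_subset_of_ncard_le hXv (by rw [hcompl, hXc, h])
    exact ⟨huniv, v, hX⟩
  · rintro ⟨huniv, v, hv⟩
    exact le_antisymm (muT_le_card_sub_one huniv) (hcompl v ▸ ncard_le_muT hv)

end MuT

section Domination

variable {V : Type*} {G : SimpleGraph V}

theorem isDomSet_singleton_iff {v : V} : IsDomSet G {v} ↔ ∀ u, u ≠ v → G.Adj v u := by
  simp [IsDomSet]

theorem gammaDom_eq_one_iff [Finite V] : gammaDom G = 1 ↔ ∃ v, IsDomSet G {v} := by
  constructor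
  · intro h
    rw [gammaDom] at h
    obtain ⟨D, hD, hD1⟩ := h ▸ Nat.sInf_mem (Nat.nonempty_of_sInf_eq_succ h)
    obtain ⟨v, rfl⟩ := ncard_eq_one.mp hD1
    exact ⟨v, hD⟩
  · rintro ⟨v, hv⟩
    refine le_antisymm (Nat.sInf_le ⟨{v}, hv, ncard_singleton v⟩) ?_
    refine le_csInf ⟨1, {v}, hv, ncard_singleton v⟩ ?_
    rintro _ ⟨D, hD, rfl⟩
    have hDne : D.Nonempty := by
      by_contra! hempty
      obtain ⟨u, hu, -⟩ := hD v (by simp [hempty])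
      simp [hempty] at hu
    exact (ncard_pos (toFinite D)).mpr hDne

end Domination

/-- `μt(G) = n(G)` iff `G` is complete, and `μt(G) = n(G) - 1` iff `G` is
non-complete with domination number one. -/
theorem muT_eq_card_iff_and_muT_eq_card_sub_one_iff {V : Type*} [Fintype V]
    (G : SimpleGraph V) (hG : G.Connected) :
    (muT G = Fintype.card V ↔ G = ⊤) ∧
    (muT G = Fintype.card V - 1 ↔ (G ≠ ⊤ ∧ gammaDom G = 1)) := by
  rw [← Nat.card_eq_fintype_card, muT_eq_card_iff hG, muT_eq_card_sub_one_iff hG,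
    isTMVSet_univ_iff, gammaDom_eq_one_iff]
  simp [isTMVSet_compl_singleton_iff, isDomSet_singleton_iff]
end

section
/- For any finite connected non-complete simple graph G, μt(G) ≤ n(G) − γc(G), where γc(G) is the connected domination number of G. -/
open SimpleGraph

lemma walk_reachable_induce {V : Type*} (G : SimpleGraph V) (D : Set V) :
    ∀ {x y : V} (p : G.Walk x y) (_ : ∀ w ∈ p.support, w ∈ D)
      (hx : x ∈ D) (hy : y ∈ D), (G.induce D).Reachable ⟨x, hx⟩ ⟨y, hy⟩ := by
  intro x y p
  induction p with
  | nil => intro _ hx hy; rfl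
  | @cons a b c hadj q ih =>
      intro hsup hx hy
      have hb : b ∈ D := hsup b (by simp)
      have h1 : (G.induce D).Adj ⟨a, hx⟩ ⟨b, hb⟩ := by
        simpa [SimpleGraph.comap] using hadj
      exact h1.reachable.trans (ih (fun w hw => hsup w (by simp [hw])) hb hy)

/-- For any finite connected non-complete graph `G`,
`μt(G) ≤ n(G) - γc(G)`. -/
theorem muT_le_card_sub_gammaConnDom {V : Type*} [Fintype V] (G : SimpleGraph V)
    (hG : G.Connected) (hnc : G ≠ ⊤) :
    muT G ≤ Fintype.card V - gammaConnDom G := by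
  unfold muT gammaConnDom IsConnDomSet IsDomSet IsTMVSet
  classical
  -- a nonadjacent pair
  obtain ⟨a, b, hab, hnadj⟩ : ∃ a b : V, a ≠ b ∧ ¬ G.Adj a b := by
    by_contra h
    push_neg at h
    exact hnc (by
      ext x y
      simp only [top_adj]
      exact ⟨fun h' => h'.ne, h x y⟩)
  apply csSup_le
  · exact ⟨0, ∅, fun x y => by
      obtain ⟨p, hp⟩ := (hG x y).exists_walk_length_eq_dist
      exact ⟨p, hp, by simp⟩, by simp⟩
  rintro n ⟨X, hX, rfl⟩
  set D : Set V := Xᶜ with hD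
  -- key: a "mid" vertex not in X on any nonadjacent pair's geodesic
  have key : ∀ x y : V, x ≠ y → ¬ G.Adj x y →
      ∃ m : V, m ∉ X ∧ G.Adj x m := by
    intro x y hxy hnxy
    obtain ⟨p, hlen, hint⟩ := hX x y
    have hpos : 0 < p.length := by
      rcases Nat.eq_zero_or_pos p.length with h | h
      · exact absurd (SimpleGraph.Walk.eq_of_length_eq_zero h) hxy
      · exact h
    set m := p.getVert 1 with hm
    have hadj : G.Adj x m := by
      have := p.adj_getVert_succ (i := 0) hpos
      simpa [p.getVert_zero] using this
    have hmy : m ≠ y := by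
      intro h; exact hnxy (h ▸ hadj)
    have hmem : m ∈ p.support :=
      SimpleGraph.Walk.mem_support_iff_exists_getVert.mpr ⟨1, rfl, hpos⟩
    exact ⟨m, hint m hmem (fun h => G.irrefl (h ▸ hadj)) hmy, hadj⟩
  -- D is nonempty
  have hDne : D.Nonempty := by
    obtain ⟨m, hm, _⟩ := key a b hab hnadj
    exact ⟨m, hm⟩
  -- D dominates
  have hdom : ∀ v : V, v ∉ D → ∃ u ∈ D, G.Adj u v := by
    intro v hv
    simp only [hD, Set.mem_compl_iff, not_not] at hv
    by_cases huniv : ∀ u : V, u ≠ v → G.Adj v u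
    · obtain ⟨m, hmX, _⟩ := key a b hab hnadj
      have hmv : m ≠ v := fun h => hmX (h ▸ hv)
      exact ⟨m, hmX, (huniv m hmv).symm⟩
    · push_neg at huniv
      obtain ⟨u, hune, hnu⟩ := huniv
      obtain ⟨m, hmX, hadj⟩ := key v u hune.symm hnu
      exact ⟨m, hmX, hadj.symm⟩
  -- D induced connected
  have hconn : (G.induce D).Connected := by
    rw [SimpleGraph.connected_iff]
    refine ⟨?_, ⟨⟨hDne.choose, hDne.choose_spec⟩⟩⟩
    rintro ⟨x, hx⟩ ⟨y, hy⟩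
    obtain ⟨p, _, hint⟩ := hX x y
    refine walk_reachable_induce G D p ?_ hx hy
    intro w hw
    by_cases h1 : w = x
    · exact h1 ▸ hx
    by_cases h2 : w = y
    · exact h2 ▸ hy
    · exact hint w hw h1 h2
  -- arithmetic
  have hmem : D.ncard ∈ {n : ℕ | ∃ D : Set V, ((∀ v : V, v ∉ D → ∃ u ∈ D, G.Adj u v) ∧
      (G.induce D).Connected) ∧ D.ncard = n} := ⟨D, ⟨hdom, hconn⟩, rfl⟩
  have hinf := Nat.sInf_le hmem
  have hsum : X.ncard + D.ncard = Fintype.card V := by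
    simpa [hD] using Set.ncard_add_ncard_compl X
  omega
end

section
/- Let G be a finite connected simple graph with domination number γ(G) ≥ 2. For any maximum total mutual-visibility set X of G and any vertex v ∈ V(G), the open neighborhood of v contains at least one vertex not in X, i.e., N_G(v) ∩ (V(G) \ X) ≠ ∅. -/
open SimpleGraph

theorem gammaDom_le_ncard {V : Type*} {G : SimpleGraph V} {D : Set V} (hD : IsDomSet G D) :
    gammaDom G ≤ D.ncard :=
  Nat.sInf_le ⟨D, hD, rfl⟩

theorem isDomSet_singleton {V : Type*} {G : SimpleGraph V} {v : V}
    (hv : ∀ u, u ≠ v → G.Adj v u) : IsDomSet G {v} :=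
  fun u hu => ⟨v, rfl, hv u hu⟩

/-- The first step of an `X`-visibility path from `v` lands in `X`, so it must already be the
endpoint. -/
theorem IsTMVSet.adj_of_neighborSet_subset {V : Type*} {G : SimpleGraph V} {X : Set V}
    (hX : IsTMVSet G X) {v : V} (hN : G.neighborSet v ⊆ X) {u : V} (hu : u ≠ v) :
    G.Adj v u := by
  obtain ⟨p, -, hinternal⟩ := hX v u
  cases p with
  | nil => exact absurd rfl hu
  | @cons _ w _ hvw _ =>
    by_contra hvu
    have hwu : w ≠ u := fun h => hvu (h ▸ hvw)
    exact hinternal w (by simp) hvw.ne' hwu (hN hvw)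

theorem exists_neighbor_notMem_max_tmv_general {V : Type*} (G : SimpleGraph V)
    (hγ : 2 ≤ gammaDom G)
    (X : Set V) (hX : IsTMVSet G X) (v : V) :
    ∃ u, u ∈ G.neighborSet v ∧ u ∉ X := by
  by_contra! hN
  have hdom : IsDomSet G {v} :=
    isDomSet_singleton fun u hu => hX.adj_of_neighborSet_subset hN hu
  have := gammaDom_le_ncard hdom
  rw [Set.ncard_singleton] at this
  omega

/-- If `γ(G) ≥ 2` then every vertex of `G` has a neighbor outside any
maximum total mutual-visibility set. -/
theorem exists_neighbor_notMem_max_tmv {V : Type*} [Fintype V] (G : SimpleGraph V)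
    (hG : G.Connected) (hγ : 2 ≤ gammaDom G)
    (X : Set V) (hX : IsTMVSet G X) (hmax : X.ncard = muT G) (v : V) :
    ∃ u, u ∈ G.neighborSet v ∧ u ∉ X :=
  exists_neighbor_notMem_max_tmv_general G hγ X hX v
end

section
/- For any finite connected simple graph G of order at least two and any finite connected simple graph H, P(G) × V(H) ⊆ P(G □ H), where G □ H is the Cartesian product and, for a graph Γ, P(Γ) is the set of vertices v for which there exist vertices u,w with N_Γ[u] ∩ N_Γ[w] = {v}. -/
open SimpleGraph

/-! If `N[u] ∩ N[w] = {g}` in `G`, the same two vertices placed in the layer of `h` witness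
`(g, h) ∈ P(G □ H)`: a common neighbour in the product either stays in the layer, where it
must be `(g, h)`, or leaves it along `H`, which is possible only when `u = w`. In a connected
graph on at least two vertices no closed neighbourhood is a singleton, so `u ≠ w`. -/

namespace SimpleGraph

variable {V W : Type*} {G : SimpleGraph V} {H : SimpleGraph W}

lemma closedNbhd_boxProd (x : V × W) :
    closedNbhd (G □ H) x = closedNbhd G x.1 ×ˢ {x.2} ∪ {x.1} ×ˢ H.neighborSet x.2 := by
  ext ⟨a, b⟩
  simp only [closedNbhd, neighborSet_boxProd, Set.mem_insert_iff, Set.mem_union, Set.mem_prod,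
    Set.mem_singleton_iff, Prod.ext_iff]
  tauto

lemma closedNbhd_boxProd_inter_of_ne {u w : V} (huw : u ≠ w) (h : W) :
    closedNbhd (G □ H) (u, h) ∩ closedNbhd (G □ H) (w, h) =
      (closedNbhd G u ∩ closedNbhd G w) ×ˢ {h} := by
  ext ⟨a, b⟩
  simp only [closedNbhd_boxProd, Set.mem_inter_iff, Set.mem_union, Set.mem_prod,
    Set.mem_singleton_iff, mem_neighborSet]
  constructor
  · rintro ⟨⟨hu, rfl⟩ | ⟨rfl, hb⟩, ⟨hw, hbh⟩ | ⟨rfl, hb'⟩⟩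
    · exact ⟨⟨hu, hw⟩, rfl⟩
    · exact absurd hb' H.irrefl
    · exact absurd hbh (H.ne_of_adj hb).symm
    · exact absurd rfl huw
  · rintro ⟨⟨hu, hw⟩, rfl⟩
    exact ⟨Or.inl ⟨hu, rfl⟩, Or.inl ⟨hw, rfl⟩⟩

lemma Preconnected.closedNbhd_ne_singleton [Nontrivial V] (hG : G.Preconnected) (v : V) :
    closedNbhd G v ≠ {v} := by
  obtain ⟨u, hvu⟩ := hG.exists_adj_of_nontrivial v
  intro hv
  have hu : u ∈ closedNbhd G v := Set.mem_insert_of_mem _ hvu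
  rw [hv] at hu
  exact G.ne_of_adj hvu hu.symm

lemma Preconnected.ne_of_closedNbhd_inter_eq_singleton [Nontrivial V] (hG : G.Preconnected)
    {u w g : V} (h : closedNbhd G u ∩ closedNbhd G w = {g}) : u ≠ w := by
  rintro rfl
  rw [Set.inter_self] at h
  have hug : u = g := h.subset (Set.mem_insert u _)
  exact hG.closedNbhd_ne_singleton u (hug ▸ h)

lemma Preconnected.pSet_prod_subset_pSet_boxProd [Nontrivial V] (hG : G.Preconnected) :
    pSet G ×ˢ (Set.univ : Set W) ⊆ pSet (G □ H) := by
  rintro ⟨g, h⟩ ⟨⟨u, w, huw⟩, -⟩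
  refine ⟨(u, h), (w, h), ?_⟩
  rw [closedNbhd_boxProd_inter_of_ne (hG.ne_of_closedNbhd_inter_eq_singleton huw), huw,
    Set.singleton_prod_singleton]

end SimpleGraph

/-- `P(G) × V(H) ⊆ P(G □ H)`. -/
theorem pSet_prod_subset_pSet_boxProd {V W : Type*} [Fintype V]
    (G : SimpleGraph V) (H : SimpleGraph W) (hG : G.Connected)
    (hn : 2 ≤ Fintype.card V) :
    pSet G ×ˢ (Set.univ : Set W) ⊆ pSet (G □ H) :=
  have : Nontrivial V := Fintype.one_lt_card_iff_nontrivial.mp hn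
  hG.preconnected.pSet_prod_subset_pSet_boxProd
end
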